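/- Let θ ∈ (0, 2π) with θ ≠ π, and suppose that the Robin function is invariant under the rotation of angle θ around x₀, i.e. γ̃(x₀ + e^{iθ}·(x − x₀)) = γ̃(x) for all x in a neighborhood of x₀ on which both sides are defined. Then T''(x₀) = 0 and T'''(x₀) = 0. -/

import Mathlib

/-!
Injectivity of `T` forces `T'(x₀) ≠ 0`: otherwise `T - T(x₀)` is locally an `n`-th power, `n ≥ 2`,
of a local coordinate, hence not injective. So near `x₀` the Robin function is
`-(1/2π) log(1 - |T|²) + (1/2π) Re log(T'/T'(x₀))` plus a constant. Along the line `t ↦ x₀ + t u`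
its first derivative at `0` is `(1/2π) Re(u T''/T')` and its second derivative is
`(1/2π) (2 |T'(x₀) u|² + Re(u² (T''/T')'(x₀)))`. Rotation invariance lets us replace `u` by
`e^{iθ} u`, and since neither `e^{iθ}` nor `e^{2iθ}` is `1`, both `T''/T'` and its derivative
vanish at `x₀`.
-/

open Complex

/-- The Robin function `γ̃(x) = -(1/(2π))·log(1 - |T(x)|²) + (1/(2π))·log|T'(x)|`. -/
noncomputable def robin (T : ℂ → ℂ) (x : ℂ) : ℝ :=
  -(2 * Real.pi)⁻¹ * Real.log (1 - ‖T x‖ ^ 2)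
    + (2 * Real.pi)⁻¹ * Real.log ‖deriv T x‖

open Filter Set Topology
open scoped Real

theorem AnalyticAt.exists_analyticAt_pow_eq {h : ℂ → ℂ} {x : ℂ} (hh : AnalyticAt ℂ h x)
    (hx : h x ≠ 0) {n : ℕ} (hn : n ≠ 0) :
    ∃ k : ℂ → ℂ, AnalyticAt ℂ k x ∧ k x ≠ 0 ∧ ∀ z, k z ^ n = h z := by
  obtain ⟨c, hc⟩ := IsAlgClosed.exists_pow_nat_eq (h x) (Nat.pos_of_ne_zero hn)
  refine ⟨fun z => c * (h z / h x) ^ (n⁻¹ : ℂ), ?_, ?_, fun z => ?_⟩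
  · exact analyticAt_const.mul ((hh.div analyticAt_const hx).cpow analyticAt_const (by simp [hx]))
  · have hc0 : c ≠ 0 := fun h0 => hx (by rw [← hc, h0, zero_pow hn])
    simpa [hx] using hc0
  · rw [mul_pow, cpow_nat_inv_pow _ hn, hc, mul_div_cancel₀ _ hx]

theorem AnalyticAt.exists_eventuallyEq_pow_of_analyticOrderAt_eq {g : ℂ → ℂ} {x : ℂ} {n : ℕ}
    (hg : AnalyticAt ℂ g x) (hord : analyticOrderAt g x = n) (hn : n ≠ 0) :
    ∃ φ : ℂ → ℂ, AnalyticAt ℂ φ x ∧ φ x = 0 ∧ deriv φ x ≠ 0 ∧ g =ᶠ[𝓝 x] fun z => φ z ^ n := by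
  obtain ⟨h, hha, hhx, hgh⟩ := hg.analyticOrderAt_eq_natCast.mp hord
  obtain ⟨k, hka, hkx, hkh⟩ := hha.exists_analyticAt_pow_eq hhx hn
  have hφ : HasDerivAt (fun z => (z - x) * k z) (k x) x := by
    simpa using ((hasDerivAt_id x).sub_const x).fun_mul hka.differentiableAt.hasDerivAt
  refine ⟨fun z => (z - x) * k z, (analyticAt_id.sub analyticAt_const).mul hka, by simp,
    hφ.deriv ▸ hkx, ?_⟩
  filter_upwards [hgh] with z hz
  rw [hz, mul_pow, hkh, smul_eq_mul]

theorem not_injOn_pow_of_hasStrictDerivAt {φ : ℂ → ℂ} {c x : ℂ} (hφ : HasStrictDerivAt φ c x)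
    (hc : c ≠ 0) (hφx : φ x = 0) {n : ℕ} (hn : 2 ≤ n) {s : Set ℂ} (hs : s ∈ 𝓝 x) :
    ¬ InjOn (fun z => φ z ^ n) s := by
  intro hinj
  obtain ⟨ζ, hζ⟩ : ∃ ζ : ℂ, IsPrimitiveRoot ζ n := ⟨_, isPrimitiveRoot_exp n (by omega)⟩
  have himage : ∀ᶠ y in 𝓝 0, y ∈ φ '' s := by
    rw [← hφx, ← hφ.map_nhds_eq hc]
    exact image_mem_map hs
  have hrot : Tendsto (ζ * ·) (𝓝 0) (𝓝 0) := by
    simpa using (continuous_const_mul ζ).tendsto 0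
  obtain ⟨y, ⟨⟨a, ha, rfl⟩, ⟨b, hb, hab⟩⟩, hy⟩ :=
    (((himage.and (hrot.eventually himage)).filter_mono nhdsWithin_le_nhds).and
      (self_mem_nhdsWithin (s := {0}ᶜ))).exists
  have hba : b = a := hinj hb ha (by simp only [hab, mul_pow, hζ.pow_eq_one, one_mul])
  have : (ζ - 1) * φ a = 0 := by rw [sub_mul, ← hab, hba, one_mul, sub_self]
  exact (mul_ne_zero (sub_ne_zero.mpr (hζ.ne_one (by omega))) hy) this

theorem AnalyticAt.deriv_ne_zero_of_injOn {f : ℂ → ℂ} {x : ℂ} {s : Set ℂ} (hf : AnalyticAt ℂ f x)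
    (hs : s ∈ 𝓝 x) (hinj : InjOn f s) : deriv f x ≠ 0 := by
  intro hf'
  set g : ℂ → ℂ := fun z => f z - f x
  have hg : AnalyticAt ℂ g x := hf.sub analyticAt_const
  obtain ⟨n, hn⟩ : ∃ n : ℕ, (n : ℕ∞) = analyticOrderAt g x := by
    refine ENat.ne_top_iff_exists.mp fun htop => ?_
    obtain ⟨z, ⟨hz, hzs⟩, hzx⟩ := (((analyticOrderAt_eq_top.mp htop).and hs).filter_mono
      nhdsWithin_le_nhds |>.and (self_mem_nhdsWithin (s := {x}ᶜ))).exists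
    exact hzx (hinj hzs (mem_of_mem_nhds hs) (sub_eq_zero.mp hz))
  have hn0 : n ≠ 0 := by
    rintro rfl
    exact hg.analyticOrderAt_ne_zero.mpr (sub_self _) hn.symm
  obtain ⟨φ, hφa, hφx, hφ', hgφ⟩ := hg.exists_eventuallyEq_pow_of_analyticOrderAt_eq hn.symm hn0
  have hn1 : n ≠ 1 := by
    rintro rfl
    have : deriv g x = deriv φ x := by simpa using hgφ.deriv_eq
    exact hφ' (by rw [← this, deriv_sub_const, hf'])
  refine not_injOn_pow_of_hasStrictDerivAt hφa.hasStrictDerivAt hφ' hφx (n := n) (by omega)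
    (inter_mem hs hgφ) fun a ha b hb hab => hinj ha.1 hb.1 ?_
  have : g a = g b := by rw [ha.2, hb.2]; exact hab
  exact sub_left_inj.mp this

def HasSecondDerivAt (f : ℝ → ℝ) (f' f'' a : ℝ) : Prop :=
  ∃ g : ℝ → ℝ, (∀ᶠ t in 𝓝 a, HasDerivAt f (g t) t) ∧ g a = f' ∧ HasDerivAt g f'' a

namespace HasSecondDerivAt

variable {f g : ℝ → ℝ} {f' f'' g' g'' a : ℝ}

theorem add (hf : HasSecondDerivAt f f' f'' a) (hg : HasSecondDerivAt g g' g'' a) :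
    HasSecondDerivAt (fun t => f t + g t) (f' + g') (f'' + g'') a := by
  obtain ⟨F, hF, rfl, hF'⟩ := hf
  obtain ⟨G, hG, rfl, hG'⟩ := hg
  exact ⟨fun t => F t + G t, by filter_upwards [hF, hG] with t h₁ h₂ using h₁.add h₂, rfl,
    hF'.add hG'⟩

theorem const_mul (c : ℝ) (hf : HasSecondDerivAt f f' f'' a) :
    HasSecondDerivAt (fun t => c * f t) (c * f') (c * f'') a := by
  obtain ⟨F, hF, rfl, hF'⟩ := hf
  exact ⟨fun t => c * F t, hF.mono fun t ht => ht.const_mul c, rfl, hF'.const_mul c⟩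

theorem add_const (c : ℝ) (hf : HasSecondDerivAt f f' f'' a) :
    HasSecondDerivAt (fun t => f t + c) f' f'' a := by
  obtain ⟨F, hF, hFa, hF'⟩ := hf
  exact ⟨F, hF.mono fun t ht => ht.add_const c, hFa, hF'⟩

theorem congr_of_eventuallyEq (hf : HasSecondDerivAt f f' f'' a) (h : g =ᶠ[𝓝 a] f) :
    HasSecondDerivAt g f' f'' a := by
  obtain ⟨F, hF, hFa, hF'⟩ := hf
  exact ⟨F, by filter_upwards [hF, h.eventuallyEq_nhds] with t ht hgf
    using ht.congr_of_eventuallyEq hgf, hFa, hF'⟩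

theorem unique (hf : HasSecondDerivAt f f' f'' a) (hg : HasSecondDerivAt f g' g'' a) :
    f' = g' ∧ f'' = g'' := by
  obtain ⟨F, hF, rfl, hF'⟩ := hf
  obtain ⟨G, hG, rfl, hG'⟩ := hg
  have hFG : F =ᶠ[𝓝 a] G := by
    filter_upwards [hF, hG] with t h₁ h₂ using h₁.unique h₂
  exact ⟨hFG.self_of_nhds, hF'.unique (hG'.congr_of_eventuallyEq hFG)⟩

end HasSecondDerivAt

theorem tendsto_line (x₀ u : ℂ) : Tendsto (fun t : ℝ => x₀ + t * u) (𝓝 0) (𝓝 x₀) := by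
  simpa using (show Continuous fun t : ℝ => x₀ + t * u by fun_prop).tendsto 0

theorem AnalyticAt.eventually_hasDerivAt_line {F : ℂ → ℂ} {x₀ : ℂ} (hF : AnalyticAt ℂ F x₀)
    (u : ℂ) :
    ∀ᶠ t : ℝ in 𝓝 0, HasDerivAt (fun z => F (x₀ + z * u)) (deriv F (x₀ + t * u) * u) t := by
  filter_upwards [(tendsto_line x₀ u).eventually hF.eventually_analyticAt] with t ht
  simpa [Function.comp_def] using ht.differentiableAt.hasDerivAt.comp (t : ℂ)
    (((hasDerivAt_id (t : ℂ)).mul_const u).const_add x₀)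

theorem AnalyticAt.hasSecondDerivAt_re_line {L : ℂ → ℂ} {x₀ : ℂ} (hL : AnalyticAt ℂ L x₀)
    (u : ℂ) :
    HasSecondDerivAt (fun t : ℝ => (L (x₀ + t * u)).re) (deriv L x₀ * u).re
      (deriv (deriv L) x₀ * u ^ 2).re 0 := by
  refine ⟨fun t => (deriv L (x₀ + t * u) * u).re,
    (hL.eventually_hasDerivAt_line u).mono fun t ht => ht.real_of_complex, by simp, ?_⟩
  simpa [sq, mul_assoc] using
    ((hL.deriv.eventually_hasDerivAt_line u).self_of_nhds.mul_const u).real_of_complex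

theorem hasSecondDerivAt_log_one_sub_norm_sq {E : Type*} [NormedAddCommGroup E]
    [InnerProductSpace ℝ E] {A A' : ℝ → E} {A'' : E} {a : ℝ}
    (hA : ∀ᶠ t in 𝓝 a, HasDerivAt A (A' t) t) (hA' : HasDerivAt A' A'' a) (ha : A a = 0) :
    HasSecondDerivAt (fun t => Real.log (1 - ‖A t‖ ^ 2)) 0 (-(2 * ‖A' a‖ ^ 2)) a := by
  set N' : ℝ → ℝ := fun t => 2 * inner ℝ (A t) (A' t)
  have hN : ∀ᶠ t in 𝓝 a, HasDerivAt (fun t => 1 - ‖A t‖ ^ 2) (-N' t) t :=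
    hA.mono fun t ht => by simpa using ht.norm_sq.const_sub 1
  have hne : ∀ᶠ t in 𝓝 a, 1 - ‖A t‖ ^ 2 ≠ 0 :=
    hN.self_of_nhds.continuousAt.eventually_ne (by simp [ha])
  refine ⟨fun t => -N' t / (1 - ‖A t‖ ^ 2), ?_, by simp [N', ha], ?_⟩
  · filter_upwards [hN, hne] with t ht htne using ht.log htne
  · have hN' : HasDerivAt N' (2 * ‖A' a‖ ^ 2) a := by
      simpa [N', ha, real_inner_self_eq_norm_sq] using (hA.self_of_nhds.inner ℝ hA').const_mul 2
    simpa [N', ha] using hN'.fun_neg.fun_div hN.self_of_nhds hne.self_of_nhds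

theorem robin_hasSecondDerivAt_line {T : ℂ → ℂ} {x₀ : ℂ} (hT : AnalyticAt ℂ T x₀) (hT0 : T x₀ = 0)
    (hT' : deriv T x₀ ≠ 0) (u : ℂ) :
    HasSecondDerivAt (fun t : ℝ => robin T (x₀ + t * u))
      ((2 * π)⁻¹ * (logDeriv (deriv T) x₀ * u).re)
      ((2 * π)⁻¹ * (2 * ‖deriv T x₀ * u‖ ^ 2 + (deriv (logDeriv (deriv T)) x₀ * u ^ 2).re)) 0 := by
  set L : ℂ → ℂ := fun z => log (deriv T z / deriv T x₀)
  have hslit : ∀ᶠ z in 𝓝 x₀, AnalyticAt ℂ (deriv T) z ∧ deriv T z / deriv T x₀ ∈ slitPlane :=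
    hT.deriv.eventually_analyticAt.and <| (hT.deriv.continuousAt.div_const _).eventually_mem
      (isOpen_slitPlane.mem_nhds (by simp [hT']))
  have hL : AnalyticAt ℂ L x₀ :=
    (hT.deriv.div analyticAt_const hT').clog (by simp [hT'])
  have hL' : deriv L =ᶠ[𝓝 x₀] logDeriv (deriv T) := by
    filter_upwards [hslit] with z ⟨hz, hzs⟩
    have hz0 : deriv T z ≠ 0 := by simpa [hT'] using slitPlane_ne_zero hzs
    rw [((hz.differentiableAt.hasDerivAt.div_const _).clog hzs).deriv, logDeriv_apply]
    field_simp
  have hrobin : ∀ᶠ z in 𝓝 x₀, robin T z = -(2 * π)⁻¹ * Real.log (1 - ‖T z‖ ^ 2)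
      + (2 * π)⁻¹ * ((L z).re + Real.log ‖deriv T x₀‖) := by
    filter_upwards [hslit] with z ⟨_, hzs⟩
    have hz0 : deriv T z ≠ 0 := by simpa [hT'] using slitPlane_ne_zero hzs
    rw [robin, log_re, norm_div, Real.log_div (norm_ne_zero_iff.mpr hz0)
      (norm_ne_zero_iff.mpr hT')]
    ring
  have hH := hL.hasSecondDerivAt_re_line u
  rw [hL'.self_of_nhds, hL'.deriv_eq] at hH
  have hP := hasSecondDerivAt_log_one_sub_norm_sq
    ((hT.eventually_hasDerivAt_line u).mono fun t ht => ht.comp_ofReal)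
    ((hT.deriv.eventually_hasDerivAt_line u).self_of_nhds.mul_const u).comp_ofReal
    (by simpa using hT0)
  convert ((hP.const_mul _).add ((hH.add_const _).const_mul _)).congr_of_eventuallyEq
    ((tendsto_line x₀ u).eventually hrobin) using 1
  · simp
  · simp
    ring

theorem robin_rotation_re_eq {T : ℂ → ℂ} {x₀ ω : ℂ} (hT : AnalyticAt ℂ T x₀) (hT0 : T x₀ = 0)
    (hT' : deriv T x₀ ≠ 0) (hω : ‖ω‖ = 1)
    (hrot : ∀ᶠ x in 𝓝 x₀, robin T (x₀ + ω * (x - x₀)) = robin T x) (u : ℂ) :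
    (logDeriv (deriv T) x₀ * (ω * u)).re = (logDeriv (deriv T) x₀ * u).re ∧
      (deriv (logDeriv (deriv T)) x₀ * (ω * u) ^ 2).re =
        (deriv (logDeriv (deriv T)) x₀ * u ^ 2).re := by
  have hline : (fun t : ℝ => robin T (x₀ + t * u)) =ᶠ[𝓝 0]
      fun t => robin T (x₀ + t * (ω * u)) := by
    filter_upwards [(tendsto_line x₀ u).eventually hrot] with t ht
    rw [← ht]
    ring_nf
  obtain ⟨h₁, h₂⟩ := ((robin_hasSecondDerivAt_line hT hT0 hT' (ω * u)).congr_of_eventuallyEq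
    hline).unique (robin_hasSecondDerivAt_line hT hT0 hT' u)
  have hπ : (2 * π)⁻¹ ≠ 0 := by positivity
  rw [mul_left_comm, norm_mul ω, hω, one_mul] at h₂
  exact ⟨mul_left_cancel₀ hπ h₁, add_left_cancel (mul_left_cancel₀ hπ h₂)⟩

theorem eq_zero_of_forall_re_mul_pow_eq_zero {c : ℂ} {n : ℕ} (hn : n ≠ 0)
    (h : ∀ u : ℂ, (c * u ^ n).re = 0) : c = 0 := by
  obtain ⟨u, hu⟩ := IsAlgClosed.exists_pow_nat_eq ((starRingEnd ℂ) c) (Nat.pos_of_ne_zero hn)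
  simpa [hu, mul_conj] using h u

theorem eq_zero_of_forall_re_mul_pow_rotation_eq {c ω : ℂ} {n : ℕ} (hn : n ≠ 0) (hω : ω ^ n ≠ 1)
    (h : ∀ u : ℂ, (c * (ω * u) ^ n).re = (c * u ^ n).re) : c = 0 := by
  have : c * (ω ^ n - 1) = 0 := eq_zero_of_forall_re_mul_pow_eq_zero hn fun u => by
    rw [show c * (ω ^ n - 1) * u ^ n = c * (ω * u) ^ n - c * u ^ n by ring, sub_re, h, sub_self]
  exact (mul_eq_zero.mp this).resolve_right (sub_ne_zero.mpr hω)

theorem exp_mul_I_pow_ne_one {θ : ℝ} (hθ : θ ∈ Ioo 0 (2 * π)) (hθπ : θ ≠ π) {k : ℕ}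
    (hk0 : 0 < k) (hk2 : k ≤ 2) : exp (θ * I) ^ k ≠ 1 := by
  rw [← exp_nat_mul, Ne, exp_eq_one_iff]
  rintro ⟨n, hn⟩
  have hkθ : (k : ℝ) * θ = n * (2 * π) := by
    simpa using congrArg im hn
  obtain ⟨hθ0, hθ2π⟩ := hθ
  have hk : (k : ℝ) ≤ 2 := by exact_mod_cast hk2
  have hk' : (1 : ℝ) ≤ k := by exact_mod_cast hk0
  have hn0 : (0 : ℝ) < n := by nlinarith [Real.pi_pos]
  have hn2 : (n : ℝ) < 2 := by nlinarith [Real.pi_pos]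
  obtain rfl : n = 1 := by
    have : (0 : ℤ) < n := by exact_mod_cast hn0
    have : n < (2 : ℤ) := by exact_mod_cast hn2
    omega
  interval_cases k
  · exact hθ2π.ne (by simpa using hkθ)
  · exact hθπ (by linarith [show (2 : ℝ) * θ = 2 * π by simpa using hkθ])

theorem AnalyticAt.deriv_logDeriv {f : ℂ → ℂ} {x : ℂ} (hf : AnalyticAt ℂ f x) (hfx : f x ≠ 0) :
    deriv (logDeriv f) x = (deriv (deriv f) x * f x - deriv f x * deriv f x) / f x ^ 2 :=
  (hf.deriv.differentiableAt.hasDerivAt.div hf.differentiableAt.hasDerivAt hfx).deriv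

theorem stmt17_general
    (Ω : Set ℂ) (hΩo : IsOpen Ω)
    (x₀ : ℂ) (hx₀ : x₀ ∈ Ω)
    (T : ℂ → ℂ) (hTd : DifferentiableOn ℂ T Ω)
    (hTbij : Set.BijOn T Ω (Metric.ball 0 1))
    (hT0 : T x₀ = 0)
    (θ : ℝ) (hθ : θ ∈ Set.Ioo 0 (2 * Real.pi)) (hθπ : θ ≠ Real.pi)
    (hrot : ∀ᶠ x in nhds x₀,
      robin T (x₀ + Complex.exp ((θ : ℂ) * Complex.I) * (x - x₀)) = robin T x) :
    iteratedDeriv 2 T x₀ = 0 ∧ iteratedDeriv 3 T x₀ = 0 := by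
  have hTa : AnalyticAt ℂ T x₀ := hTd.analyticAt (hΩo.mem_nhds hx₀)
  have hT' : deriv T x₀ ≠ 0 := hTa.deriv_ne_zero_of_injOn (hΩo.mem_nhds hx₀) hTbij.injOn
  have hω : ‖exp (θ * I)‖ = 1 := norm_exp_ofReal_mul_I θ
  obtain ⟨h₁, h₂⟩ := forall_and.mp (robin_rotation_re_eq hTa hT0 hT' hω hrot)
  have hT₂ : logDeriv (deriv T) x₀ = 0 := eq_zero_of_forall_re_mul_pow_rotation_eq one_ne_zero
    (by simpa using exp_mul_I_pow_ne_one hθ hθπ one_pos one_le_two) (by simpa using h₁)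
  have hT₃ : deriv (logDeriv (deriv T)) x₀ = 0 := eq_zero_of_forall_re_mul_pow_rotation_eq
    two_ne_zero (exp_mul_I_pow_ne_one hθ hθπ two_pos le_rfl) h₂
  have hT'' : deriv (deriv T) x₀ = 0 := by simpa [logDeriv_apply, hT'] using hT₂
  have hT''' : deriv (deriv (deriv T)) x₀ = 0 := by
    simpa [hTa.deriv.deriv_logDeriv hT', hT'', hT'] using hT₃
  simpa [iteratedDeriv_succ] using ⟨hT'', hT'''⟩

/-- if the Robin function is invariant under the rotation of angle
`θ ∈ (0,2π) \ {π}` around `x₀`, then `T''(x₀) = 0` and `T'''(x₀) = 0`. -/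
theorem stmt17
    (Ω : Set ℂ) (hΩo : IsOpen Ω) (hΩb : Bornology.IsBounded Ω)
    (hΩc : IsConnected Ω) (hΩsc : SimplyConnectedSpace Ω)
    (x₀ : ℂ) (hx₀ : x₀ ∈ Ω)
    (T : ℂ → ℂ) (hTd : DifferentiableOn ℂ T Ω)
    (hTbij : Set.BijOn T Ω (Metric.ball 0 1))
    (hT0 : T x₀ = 0)
    (θ : ℝ) (hθ : θ ∈ Set.Ioo 0 (2 * Real.pi)) (hθπ : θ ≠ Real.pi)
    (hrot : ∀ᶠ x in nhds x₀,
      robin T (x₀ + Complex.exp ((θ : ℂ) * Complex.I) * (x - x₀)) = robin T x) :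
    iteratedDeriv 2 T x₀ = 0 ∧ iteratedDeriv 3 T x₀ = 0 :=
  stmt17_general Ω hΩo x₀ hx₀ T hTd hTbij hT0 θ hθ hθπ hrot
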